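/- arXiv:1311.3907 — 4 statements merged into one kernel-verified Lean document; each statement's English description precedes it below -/
import Mathlib

section
/- Let K be a field and a ∈ K[h,h⁻¹] a nonzero Laurent polynomial which is not a monomial, with support {i₁ < i₂ < … < i_m} (m ≥ 2), degree d = i_m, and t = gcd(d−i₁, …, d−i_{m−1}). If α, c ∈ K* satisfy a(αh) = c·a(h) as Laurent polynomials, then α^t = 1 and c = α^d. -/
/-! On the support, `aᵢ αⁱ = c aᵢ` with `aᵢ ≠ 0` forces `αⁱ = c`; taking `i = d` gives `c = α^d`,
and then `α^(d - i) = 1` for every `i` in the support, so `α^t = 1` because the exponents `n`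
with `αⁿ = 1` are exactly the multiples of the order of `α`. -/

lemma zpow_finset_gcd_eq_one {G ι : Type*} [Group G] (g : G) (s : Finset ι) (f : ι → ℤ)
    (hf : ∀ i ∈ s, g ^ f i = 1) : g ^ s.gcd f = 1 :=
  orderOf_dvd_iff_zpow_eq_one.mp <|
    Finset.dvd_gcd fun i hi => orderOf_dvd_iff_zpow_eq_one.mpr (hf i hi)

lemma zpow_finset_gcd_eq_one₀ {G₀ ι : Type*} [GroupWithZero G₀] {a : G₀} (ha : a ≠ 0)
    (s : Finset ι) (f : ι → ℤ) (hf : ∀ i ∈ s, a ^ f i = 1) : a ^ s.gcd f = 1 := by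
  have hunit := zpow_finset_gcd_eq_one (Units.mk0 a ha) s f fun i hi =>
    Units.ext (by simpa using hf i hi)
  simpa using congrArg Units.val hunit

lemma zpow_eq_of_mem_support {G₀ : Type*} [CommGroupWithZero G₀] {a : ℤ →₀ G₀} {α c : G₀}
    (h : ∀ i : ℤ, a i * α ^ i = c * a i) {i : ℤ} (hi : i ∈ a.support) : α ^ i = c :=
  mul_left_cancel₀ (Finsupp.mem_support_iff.mp hi) (by rw [h i, mul_comm])

/-- A Laurent polynomial `a = Σ aᵢ hⁱ` over a field `K` is encoded as the finitely
supported function `a : ℤ →₀ K` of its coefficients.  Suppose `a` is not a monomial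
(its support has at least two elements), let `d` be its degree (the maximum of the
support) and `t` the gcd of the differences `d - i` over the support.  If
`α, c ∈ K*` satisfy `a(αh) = c·a(h)` (coefficientwise: `aᵢ αⁱ = c aᵢ` for all `i`),
then `α^t = 1` and `c = α^d`. -/
theorem stmt_3 (K : Type*) [Field K] (a : ℤ →₀ K)
    (hcard : 2 ≤ a.support.card)
    (α c : K) (hα : α ≠ 0)
    (h : ∀ i : ℤ, a i * α ^ i = c * a i) :
    α ^ (a.support.gcd fun i =>
        a.support.max' (Finset.card_pos.mp (by omega)) - i) = 1 ∧
      c = α ^ (a.support.max' (Finset.card_pos.mp (by omega))) := by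
  set d := a.support.max' (Finset.card_pos.mp (by omega))
  have hd : α ^ d = c := zpow_eq_of_mem_support h (a.support.max'_mem _)
  refine ⟨zpow_finset_gcd_eq_one₀ hα _ _ fun i hi => ?_, hd.symm⟩
  rw [zpow_sub₀ hα, hd, ← zpow_eq_of_mem_support h hi, div_self (zpow_ne_zero i hα)]
end

section
/- Let K be a field, q ∈ K*, and a ∈ K[h,h⁻¹] a nonzero Laurent polynomial with degree d and valuation e such that d + e is odd. Then there do not exist α, b, c ∈ K* and u ∈ ℤ satisfying b·c·h^(2u)·a(qh) = a(αh⁻¹). -/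
/-- A Laurent polynomial `a = Σ aᵢ hⁱ` over a field `K` is encoded as the finitely
supported function `a : ℤ →₀ K` of its coefficients; `a(qh) = Σ aᵢ qⁱ hⁱ` and
`a(αh⁻¹) = Σ aᵢ αⁱ h⁻ⁱ`.  If `q ∈ K*`, `a ≠ 0`, and the sum `d + e` of the degree
and valuation of `a` is odd, then there are no `α, b, c ∈ K*` and `u ∈ ℤ` with
`b·c·h^(2u)·a(qh) = a(αh⁻¹)` (coefficientwise).  This encodes the nonexistence of
negative-type involutions of `A(a(h),q)` when `d + e` is odd. -/
theorem stmt_8 (K : Type*) [Field K] (q : K) (hq0 : q ≠ 0)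
    (a : ℤ →₀ K) (ha : a ≠ 0)
    (hodd : Odd (a.support.max' (Finsupp.support_nonempty_iff.mpr ha)
      + a.support.min' (Finsupp.support_nonempty_iff.mpr ha))) :
    ¬ ∃ (α b c : K) (u : ℤ), α ≠ 0 ∧ b ≠ 0 ∧ c ≠ 0 ∧
      ∀ i : ℤ, b * c * q ^ (i - 2 * u) * a (i - 2 * u) = a (-i) * α ^ (-i) := by
  rintro ⟨α, b, c, u, hα, hb, hc, heq⟩
  have hne : a.support.Nonempty := Finsupp.support_nonempty_iff.mpr ha
  have hdmem : a (a.support.max' hne) ≠ 0 :=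
    Finsupp.mem_support_iff.mp (a.support.max'_mem hne)
  have hemem : a (a.support.min' hne) ≠ 0 :=
    Finsupp.mem_support_iff.mp (a.support.min'_mem hne)
  have h1 := heq (a.support.max' hne + 2 * u)
  rw [add_sub_cancel_right] at h1
  have hA : a (-(a.support.max' hne + 2 * u)) ≠ 0 := by
    intro h
    rw [h, zero_mul] at h1
    exact mul_ne_zero (mul_ne_zero (mul_ne_zero hb hc) (zpow_ne_zero _ hq0)) hdmem h1
  have h2 := heq (-(a.support.min' hne))
  rw [neg_neg] at h2
  have hB : a (-(a.support.min' hne) - 2 * u) ≠ 0 := by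
    intro h
    rw [h, mul_zero] at h2
    exact mul_ne_zero hemem (zpow_ne_zero _ hα) h2.symm
  have le1 : a.support.min' (Finsupp.support_nonempty_iff.mpr ha)
      ≤ -(a.support.max' (Finsupp.support_nonempty_iff.mpr ha) + 2 * u) :=
    Finset.min'_le _ _ (Finsupp.mem_support_iff.mpr hA)
  have le2 : -(a.support.min' (Finsupp.support_nonempty_iff.mpr ha)) - 2 * u
      ≤ a.support.max' (Finsupp.support_nonempty_iff.mpr ha) :=
    Finset.le_max' _ _ (Finsupp.mem_support_iff.mpr hB)
  obtain ⟨m, hm⟩ := hodd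
  omega
end

section
/- Let K be a field, q ∈ K* not a root of unity, a ∈ K[h,h⁻¹] not invertible, and A = A(a(h),q) the quantum generalized Weyl algebra generated by x, y, h^{±1} with relations xh = qhx, yh = q⁻¹hy, xy = a(qh), yx = a(h). If ψ is a K-algebra endomorphism of A with ψ(h) = α ∈ K* (a scalar), then ψ(x) = 0, ψ(y) = 0, and α and qα are both roots of a(h). -/
/-!
If `ψ(h) = α` is a scalar, it commutes with everything, so applying `ψ` to `xh = qhx` gives
`α ψ(x) = qα ψ(x)`, and `q ≠ 1` forces `ψ(x) = 0`; likewise `ψ(y) = 0`. Then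
`a(qα) = ψ(a(qh)) = ψ(x)ψ(y) = 0` and `a(α) = ψ(yx) = 0` as elements of `A(a(h),q)`, hence as
scalars because `K → A(a(h),q)` is injective. Injectivity holds because the algebra is nonzero:
it acts on `K[t,t⁻¹]` with `h` acting as multiplication by `t`.
-/

/-- Integer power of an element `h` of a ring, using a chosen "inverse" `h'` for
negative exponents. -/
noncomputable def zpowP {A : Type*} [Monoid A] (h h' : A) (i : ℤ) : A :=
  if 0 ≤ i then h ^ i.toNat else h' ^ (-i).toNat

/-- Evaluation of the Laurent polynomial `a(s·h) = Σ aᵢ sⁱ hⁱ` at an element `h`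
of a `K`-algebra with chosen inverse `h'`; here `a : ℤ →₀ K` records the
coefficients of `a`. -/
noncomputable def evalP {K A : Type*} [Field K] [Ring A] [Algebra K A]
    (a : ℤ →₀ K) (s : K) (h h' : A) : A :=
  a.sum fun i c => (c * s ^ i) • zpowP h h' i

/-- The defining relations of the quantum generalized Weyl algebra `A(a(h),q)`:
generators `x = ι 0`, `y = ι 1`, `h = ι 2`, `h⁻¹ = ι 3`, and relations
`xh = qhx`, `yh = q⁻¹hy`, `hh⁻¹ = h⁻¹h = 1`, `xy = a(qh)`, `yx = a(h)`. -/
inductive relG (K : Type*) [Field K] (q : K) (a : ℤ →₀ K) :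
    FreeAlgebra K (Fin 4) → FreeAlgebra K (Fin 4) → Prop
  | xh : relG K q a (FreeAlgebra.ι K 0 * FreeAlgebra.ι K 2)
      (q • (FreeAlgebra.ι K 2 * FreeAlgebra.ι K 0))
  | yh : relG K q a (FreeAlgebra.ι K 1 * FreeAlgebra.ι K 2)
      (q⁻¹ • (FreeAlgebra.ι K 2 * FreeAlgebra.ι K 1))
  | hinv : relG K q a (FreeAlgebra.ι K 2 * FreeAlgebra.ι K 3) 1
  | invh : relG K q a (FreeAlgebra.ι K 3 * FreeAlgebra.ι K 2) 1
  | xy : relG K q a (FreeAlgebra.ι K 0 * FreeAlgebra.ι K 1)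
      (evalP a q (FreeAlgebra.ι K 2) (FreeAlgebra.ι K 3))
  | yx : relG K q a (FreeAlgebra.ι K 1 * FreeAlgebra.ι K 0)
      (evalP a 1 (FreeAlgebra.ι K 2) (FreeAlgebra.ι K 3))

/-- The quantum generalized Weyl algebra `A(a(h),q)`. -/
abbrev GWA (K : Type*) [Field K] (q : K) (a : ℤ →₀ K) := RingQuot (relG K q a)

/-- The images of the generators `x, y, h, h⁻¹` in `A(a(h),q)`. -/
noncomputable def gwaGen (K : Type*) [Field K] (q : K) (a : ℤ →₀ K) (i : Fin 4) :
    GWA K q a :=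
  RingQuot.mkAlgHom K (relG K q a) (FreeAlgebra.ι K i)

section Evaluation

variable {K A B : Type*} [Field K] [Ring A] [Algebra K A] [Ring B] [Algebra K B]

lemma map_zpowP (f : A →ₐ[K] B) (h h' : A) (i : ℤ) :
    f (zpowP h h' i) = zpowP (f h) (f h') i := by
  unfold zpowP; split <;> rw [map_pow]

lemma map_evalP (f : A →ₐ[K] B) (a : ℤ →₀ K) (s : K) (h h' : A) :
    f (evalP a s h h') = evalP a s (f h) (f h') := by
  rw [evalP, evalP, map_finsuppSum]
  exact Finsupp.sum_congr fun i _ => by rw [map_smul, map_zpowP]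

lemma zpowP_self_inv {G : Type*} [DivisionMonoid G] (g : G) (i : ℤ) : zpowP g g⁻¹ i = g ^ i := by
  unfold zpowP
  split_ifs with hi
  · rw [← zpow_natCast, Int.toNat_of_nonneg hi]
  · rw [← zpow_natCast, Int.toNat_of_nonneg (by omega), inv_zpow', neg_neg]

lemma evalP_algebraMap (a : ℤ →₀ K) (s α : K) :
    evalP a s (algebraMap K A α) (algebraMap K A α⁻¹)
      = algebraMap K A (a.sum fun i c => c * (s * α) ^ i) := by
  rw [evalP, map_finsuppSum]
  refine Finsupp.sum_congr fun i _ => ?_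
  rw [← Algebra.ofId_apply, ← Algebra.ofId_apply, ← map_zpowP, zpowP_self_inv, Algebra.ofId_apply,
    Algebra.smul_def, ← map_mul, mul_zpow, mul_assoc]

lemma eq_zero_of_mul_algebraMap_eq_smul {α s : K} (hs : s ≠ 1) (hα : α ≠ 0) {z : A}
    (h : z * algebraMap K A α = s • (algebraMap K A α * z)) : z = 0 := by
  rw [← Algebra.commutes, ← Algebra.smul_def, smul_smul, ← sub_eq_zero, ← sub_smul] at h
  refine (smul_eq_zero.mp h).resolve_left ?_
  rw [← one_mul α, ← mul_assoc, ← sub_mul, mul_one]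
  exact mul_ne_zero (sub_ne_zero.mpr (Ne.symm hs)) hα

end Evaluation

namespace GWA

section Relations

variable {K : Type*} [Field K] {q : K} {a : ℤ →₀ K}

lemma x_mul_h : gwaGen K q a 0 * gwaGen K q a 2 = q • (gwaGen K q a 2 * gwaGen K q a 0) := by
  simpa only [gwaGen, map_mul, map_smul] using RingQuot.mkAlgHom_rel K (relG.xh (q := q) (a := a))

lemma y_mul_h : gwaGen K q a 1 * gwaGen K q a 2 = q⁻¹ • (gwaGen K q a 2 * gwaGen K q a 1) := by
  simpa only [gwaGen, map_mul, map_smul] using RingQuot.mkAlgHom_rel K (relG.yh (q := q) (a := a))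

lemma h_mul_hinv : gwaGen K q a 2 * gwaGen K q a 3 = 1 := by
  simpa only [gwaGen, map_mul, map_one] using RingQuot.mkAlgHom_rel K (relG.hinv (q := q) (a := a))

lemma x_mul_y : gwaGen K q a 0 * gwaGen K q a 1 = evalP a q (gwaGen K q a 2) (gwaGen K q a 3) := by
  simpa only [gwaGen, map_mul, map_evalP] using RingQuot.mkAlgHom_rel K (relG.xy (q := q) (a := a))

lemma y_mul_x : gwaGen K q a 1 * gwaGen K q a 0 = evalP a 1 (gwaGen K q a 2) (gwaGen K q a 3) := by
  simpa only [gwaGen, map_mul, map_evalP] using RingQuot.mkAlgHom_rel K (relG.yx (q := q) (a := a))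

end Relations

section LaurentModule

open Finsupp

variable {K : Type*} [Field K]

variable (K) in
noncomputable def shiftEnd (k : ℤ) : Module.End K (ℤ →₀ K) := lmapDomain K K (· + k)

noncomputable def scaleEnd (q : K) : Module.End K (ℤ →₀ K) := lsum K fun n => q ^ n • lsingle n

lemma shiftEnd_single (k n : ℤ) (c : K) : shiftEnd K k (single n c) = single (n + k) c := by
  rw [shiftEnd, lmapDomain_apply, mapDomain_single]

lemma scaleEnd_single (q : K) (n : ℤ) (c : K) : scaleEnd q (single n c) = q ^ n • single n c := by
  rw [scaleEnd, lsum_single, LinearMap.smul_apply, lsingle_apply]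

lemma shiftEnd_add (j k : ℤ) : shiftEnd K (j + k) = shiftEnd K j * shiftEnd K k :=
  lhom_ext fun n c => by
    rw [Module.End.mul_apply, shiftEnd_single, shiftEnd_single, shiftEnd_single, add_assoc,
      add_comm k]

lemma shiftEnd_zero : shiftEnd K 0 = 1 :=
  lhom_ext fun n c => by rw [shiftEnd_single, add_zero, Module.End.one_apply]

lemma shiftEnd_pow (k : ℤ) (n : ℕ) : shiftEnd K k ^ n = shiftEnd K (n * k) := by
  induction n with
  | zero => rw [pow_zero, Nat.cast_zero, zero_mul, shiftEnd_zero]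
  | succ n ih => rw [pow_succ, ih, ← shiftEnd_add, Nat.cast_succ, add_one_mul]

lemma zpowP_shiftEnd (i : ℤ) : zpowP (shiftEnd K 1) (shiftEnd K (-1)) i = shiftEnd K i := by
  unfold zpowP
  split_ifs with hi
  · rw [shiftEnd_pow, Int.toNat_of_nonneg hi, mul_one]
  · rw [shiftEnd_pow, Int.toNat_of_nonneg (by omega), mul_neg_one, neg_neg]

lemma evalP_shiftEnd (a : ℤ →₀ K) (s : K) :
    evalP a s (shiftEnd K 1) (shiftEnd K (-1)) = a.sum fun i c => (c * s ^ i) • shiftEnd K i := by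
  simp only [evalP, zpowP_shiftEnd]

lemma commute_evalP_shiftEnd (a : ℤ →₀ K) (s : K) (k : ℤ) :
    Commute (evalP a s (shiftEnd K 1) (shiftEnd K (-1))) (shiftEnd K k) := by
  rw [evalP_shiftEnd]
  refine Commute.sum_left _ _ _ fun i _ => Commute.smul_left ?_ _
  rw [Commute, SemiconjBy, ← shiftEnd_add, ← shiftEnd_add, add_comm]

lemma scaleEnd_mul (p r : K) : scaleEnd p * scaleEnd r = scaleEnd (p * r) :=
  lhom_ext fun n c => by
    simp only [Module.End.mul_apply, scaleEnd_single, map_smul, smul_smul, mul_zpow, mul_comm]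

lemma scaleEnd_one : scaleEnd (1 : K) = 1 :=
  lhom_ext fun n c => by rw [scaleEnd_single, one_zpow, one_smul, Module.End.one_apply]

lemma scaleEnd_mul_shiftEnd {q : K} (hq : q ≠ 0) (k : ℤ) :
    scaleEnd q * shiftEnd K k = q ^ k • (shiftEnd K k * scaleEnd q) :=
  lhom_ext fun n c => by
    simp only [Module.End.mul_apply, LinearMap.smul_apply, shiftEnd_single, scaleEnd_single,
      map_smul, smul_smul, zpow_add₀ hq, mul_comm]

/-- The action of `A(a(h),q)` on `K[t,t⁻¹] ≅ ℤ →₀ K` in the basis `tⁿ`: `h` multiplies by `t`,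
`x tⁿ = qⁿ tⁿ` and `y tⁿ = q⁻ⁿ a(t) tⁿ`. -/
noncomputable def endGen (q : K) (a : ℤ →₀ K) : Fin 4 → Module.End K (ℤ →₀ K)
  | 0 => scaleEnd q
  | 1 => evalP a 1 (shiftEnd K 1) (shiftEnd K (-1)) * scaleEnd q⁻¹
  | 2 => shiftEnd K 1
  | 3 => shiftEnd K (-1)

lemma endGen_rel {q : K} (hq : q ≠ 0) (a : ℤ →₀ K) ⦃u v : FreeAlgebra K (Fin 4)⦄
    (r : relG K q a u v) :
    FreeAlgebra.lift K (endGen q a) u = FreeAlgebra.lift K (endGen q a) v := by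
  induction r with
  | xh => simpa only [map_mul, map_smul, FreeAlgebra.lift_ι_apply, endGen, zpow_one]
      using scaleEnd_mul_shiftEnd hq 1
  | yh =>
    simp only [map_mul, map_smul, FreeAlgebra.lift_ι_apply, endGen]
    rw [mul_assoc, scaleEnd_mul_shiftEnd (inv_ne_zero hq), zpow_one, mul_smul_comm, ← mul_assoc,
      (commute_evalP_shiftEnd a 1 1).eq, mul_assoc]
  | hinv =>
    simp only [map_mul, map_one, FreeAlgebra.lift_ι_apply, endGen]
    rw [← shiftEnd_add, add_neg_cancel, shiftEnd_zero]
  | invh =>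
    simp only [map_mul, map_one, FreeAlgebra.lift_ι_apply, endGen]
    rw [← shiftEnd_add, neg_add_cancel, shiftEnd_zero]
  | xy =>
    rw [map_mul, map_evalP (FreeAlgebra.lift K (endGen q a))]
    simp only [FreeAlgebra.lift_ι_apply, endGen]
    rw [evalP_shiftEnd, evalP_shiftEnd, Finsupp.sum, Finsupp.sum, Finset.sum_mul, Finset.mul_sum]
    refine Finset.sum_congr rfl fun i _ => ?_
    rw [smul_mul_assoc, mul_smul_comm, ← mul_assoc, scaleEnd_mul_shiftEnd hq, smul_mul_assoc,
      mul_assoc, scaleEnd_mul, mul_inv_cancel₀ hq, scaleEnd_one, mul_one, smul_smul, one_zpow,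
      mul_one, mul_comm]
  | yx =>
    rw [map_mul, map_evalP (FreeAlgebra.lift K (endGen q a))]
    simp only [FreeAlgebra.lift_ι_apply, endGen]
    rw [mul_assoc, scaleEnd_mul, inv_mul_cancel₀ hq, scaleEnd_one, mul_one]

end LaurentModule

variable {K : Type*} [Field K] {q : K} {a : ℤ →₀ K}

noncomputable def toEnd (hq : q ≠ 0) : GWA K q a →ₐ[K] Module.End K (ℤ →₀ K) :=
  RingQuot.liftAlgHom K ⟨FreeAlgebra.lift K (endGen q a), endGen_rel hq a⟩

lemma nontrivial (hq : q ≠ 0) : Nontrivial (GWA K q a) :=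
  (toEnd hq).toRingHom.domain_nontrivial

variable {A : Type*} [Ring A] [Algebra K A] {α : K}

lemma map_x_eq_zero (hq : q ≠ 1) (hα : α ≠ 0) (ψ : GWA K q a →ₐ[K] A)
    (hψ : ψ (gwaGen K q a 2) = algebraMap K A α) : ψ (gwaGen K q a 0) = 0 :=
  eq_zero_of_mul_algebraMap_eq_smul hq hα (by rw [← hψ, ← map_mul, x_mul_h, map_smul, map_mul])

lemma map_y_eq_zero (hq : q ≠ 1) (hα : α ≠ 0) (ψ : GWA K q a →ₐ[K] A)
    (hψ : ψ (gwaGen K q a 2) = algebraMap K A α) : ψ (gwaGen K q a 1) = 0 :=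
  eq_zero_of_mul_algebraMap_eq_smul (inv_ne_one.mpr hq) hα
    (by rw [← hψ, ← map_mul, y_mul_h, map_smul, map_mul])

lemma map_hinv (hα : α ≠ 0) (ψ : GWA K q a →ₐ[K] A)
    (hψ : ψ (gwaGen K q a 2) = algebraMap K A α) : ψ (gwaGen K q a 3) = algebraMap K A α⁻¹ := by
  have h : algebraMap K A α * ψ (gwaGen K q a 3) = 1 := by rw [← hψ, ← map_mul, h_mul_hinv, map_one]
  calc ψ (gwaGen K q a 3) = algebraMap K A α⁻¹ * (algebraMap K A α * ψ (gwaGen K q a 3)) := by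
        rw [← mul_assoc, ← map_mul, inv_mul_cancel₀ hα, map_one, one_mul]
    _ = algebraMap K A α⁻¹ := by rw [h, mul_one]

lemma map_evalP_of_map_h (hα : α ≠ 0) (ψ : GWA K q a →ₐ[K] A)
    (hψ : ψ (gwaGen K q a 2) = algebraMap K A α) (s : K) :
    ψ (evalP a s (gwaGen K q a 2) (gwaGen K q a 3))
      = algebraMap K A (a.sum fun i c => c * (s * α) ^ i) := by
  rw [map_evalP, hψ, map_hinv hα ψ hψ, evalP_algebraMap]

end GWA

theorem stmt_10_general (K : Type*) [Field K] (q : K) (hq0 : q ≠ 0)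
    (hq : ∀ n : ℤ, n ≠ 0 → q ^ n ≠ 1)
    (a : ℤ →₀ K)
    (ψ : GWA K q a →ₐ[K] GWA K q a) (α : K) (hα : α ≠ 0)
    (hψh : ψ (gwaGen K q a 2) = algebraMap K (GWA K q a) α) :
    ψ (gwaGen K q a 0) = 0 ∧ ψ (gwaGen K q a 1) = 0 ∧
      (a.sum fun i c => c * α ^ i) = 0 ∧
      (a.sum fun i c => c * (q * α) ^ i) = 0 := by
  have : Nontrivial (GWA K q a) := GWA.nontrivial hq0
  have hq1 : q ≠ 1 := fun h => hq 1 one_ne_zero (by rw [h, one_zpow])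
  have hx := GWA.map_x_eq_zero hq1 hα ψ hψh
  have hy := GWA.map_y_eq_zero hq1 hα ψ hψh
  have root (s : K) (hs : ψ (evalP a s (gwaGen K q a 2) (gwaGen K q a 3)) = 0) :
      (a.sum fun i c => c * (s * α) ^ i) = 0 :=
    (algebraMap K (GWA K q a)).injective (by rw [← GWA.map_evalP_of_map_h hα ψ hψh, hs, map_zero])
  refine ⟨hx, hy, ?_, root q (by rw [← GWA.x_mul_y, map_mul, hx, zero_mul])⟩
  simpa only [one_mul] using root 1 (by rw [← GWA.y_mul_x, map_mul, hy, zero_mul])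

/-- Let `q ∈ K*` not be a root of unity and `a` a non-invertible Laurent polynomial
(encoded by its coefficients `a : ℤ →₀ K`; non-invertible means not a nonzero
monomial, i.e. the support does not have exactly one element).  If `ψ` is a
`K`-algebra endomorphism of `A(a(h),q)` with `ψ(h) = α` a nonzero scalar, then
`ψ(x) = 0`, `ψ(y) = 0`, and `α` and `qα` are both roots of `a(h)`. -/
theorem stmt_10 (K : Type*) [Field K] (q : K) (hq0 : q ≠ 0)
    (hq : ∀ n : ℤ, n ≠ 0 → q ^ n ≠ 1)
    (a : ℤ →₀ K) (hainv : a.support.card ≠ 1)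
    (ψ : GWA K q a →ₐ[K] GWA K q a) (α : K) (hα : α ≠ 0)
    (hψh : ψ (gwaGen K q a 2) = algebraMap K (GWA K q a) α) :
    ψ (gwaGen K q a 0) = 0 ∧ ψ (gwaGen K q a 1) = 0 ∧
      (a.sum fun i c => c * α ^ i) = 0 ∧
      (a.sum fun i c => c * (q * α) ^ i) = 0 :=
  stmt_10_general K q hq0 hq a ψ α hα hψh
end

section
/- Let K be a field, q ∈ K* not a root of unity, and suppose α, b, c ∈ K* and u, v ∈ ℤ satisfy b·c·h^(u+v)·a(qh) = a(αh⁻¹), where a ∈ K[h,h⁻¹] is not a monomial, with degree d and t = gcd of the differences of d with the other support elements. Then b·c = b⁻¹c⁻¹α^{−(u+v)}q^{u+v}, i.e., (bc)² = α^{−(u+v)} q^{u+v}. -/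
/-- A Laurent polynomial `a = Σ aᵢ hⁱ` over a field `K` is encoded as the finitely
supported function `a : ℤ →₀ K` of its coefficients; `a(qh) = Σ aᵢ qⁱ hⁱ` and
`a(αh⁻¹) = Σ aᵢ αⁱ h⁻ⁱ`.  If `q ∈ K*` is not a root of unity, `a` is not a
monomial, and `α, b, c ∈ K*`, `u, v ∈ ℤ` satisfy `b·c·h^(u+v)·a(qh) = a(αh⁻¹)`
(coefficientwise), then `b·c = b⁻¹·c⁻¹·α^{-(u+v)}·q^{u+v}`, i.e.
`(bc)² = α^{-(u+v)} q^{u+v}`. -/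
theorem stmt_12 (K : Type*) [Field K] (q : K) (hq0 : q ≠ 0)
    (hq : ∀ n : ℤ, n ≠ 0 → q ^ n ≠ 1)
    (a : ℤ →₀ K) (hcard : 2 ≤ a.support.card)
    (α b c : K) (hα : α ≠ 0) (hb : b ≠ 0) (hc : c ≠ 0) (u v : ℤ)
    (h : ∀ i : ℤ, b * c * q ^ (i - (u + v)) * a (i - (u + v)) = a (-i) * α ^ (-i)) :
    b * c = b⁻¹ * c⁻¹ * α ^ (-(u + v)) * q ^ (u + v) ∧
      (b * c) ^ 2 = α ^ (-(u + v)) * q ^ (u + v) := by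
  set w := u + v with hw
  obtain ⟨j, hjmem⟩ := Finset.card_pos.mp (by omega : 0 < a.support.card)
  have hj : a j ≠ 0 := Finsupp.mem_support_iff.mp hjmem
  have h1 := h (j + w)
  have h2 := h (-j)
  simp only [add_sub_cancel_right, neg_neg] at h1 h2
  rw [show -j - w = -(j + w) by ring] at h2
  have hk : a (-(j + w)) ≠ 0 := by
    intro h0
    rw [h0, zero_mul] at h1
    exact (mul_ne_zero (mul_ne_zero (mul_ne_zero hb hc) (zpow_ne_zero _ hq0)) hj) h1
  have hXY : a j * a (-(j + w)) ≠ 0 := mul_ne_zero hj hk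
  have hprod : (b * c * q ^ j * a j) * (b * c * q ^ (-(j + w)) * a (-(j + w)))
      = (a (-(j + w)) * α ^ (-(j + w))) * (a j * α ^ j) := by rw [h1, h2]
  have key0 : (b * c) ^ 2 * (q ^ j * q ^ (-(j + w))) = α ^ (-(j + w)) * α ^ j :=
    mul_right_cancel₀ hXY (by linear_combination hprod)
  rw [← zpow_add₀ hq0, ← zpow_add₀ hα] at key0
  rw [show j + -(j + w) = -w by ring, show -(j + w) + j = -w by ring] at key0
  -- key0 : (b*c)^2 * q^(-w) = α^(-w)
  have h2nd : (b * c) ^ 2 = α ^ (-w) * q ^ w := by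
    have : (b * c) ^ 2 * q ^ (-w) * q ^ w = α ^ (-w) * q ^ w := by rw [key0]
    rwa [mul_assoc, ← zpow_add₀ hq0, neg_add_cancel, zpow_zero, mul_one] at this
  refine ⟨?_, h2nd⟩
  have hbc : b * c ≠ 0 := mul_ne_zero hb hc
  rw [mul_assoc, ← h2nd, ← mul_inv, pow_two, inv_mul_cancel_left₀ hbc]
end
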